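/- arXiv:2306.10495 — 2 statements merged into one kernel-verified Lean document; each statement's English description precedes it below -/
import Mathlib

section
/- The map Φ(y) = (1 + α e^T(P̄ y^{k-1}))^{−(k−2)/(k−1)} (v + α P̄ y^{k-1}) maps the set Δ = {y ∈ ℝ^n_+ : e^T y ≤ (1−α)^{−1/(k−1)}} into itself. -/
open Finset Real

noncomputable def contr {n m : ℕ} (P : Fin n → (Fin m → Fin n) → ℝ) (y : Fin n → ℝ) : Fin n → ℝ :=
  fun i => ∑ j : Fin m → Fin n, P i j * ∏ s, y (j s)

noncomputable def Phi {n : ℕ} (k : ℕ) (P : Fin n → (Fin (k-1) → Fin n) → ℝ) (v : Fin n → ℝ)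
    (α : ℝ) (y : Fin n → ℝ) : Fin n → ℝ :=
  fun i => (1 + α * ∑ l, contr P y l) ^ (-((k:ℝ)-2)/((k:ℝ)-1)) * (v i + α * contr P y i)

/-!
Write `S = eᵀ(P̄ y^{k-1})`. Column-substochasticity gives `S ≤ (eᵀy)^{k-1} ≤ (1-α)⁻¹`, and since
`(1-α)⁻¹` is the fixed point of `S ↦ 1 + α S`, also `1 + α S ≤ (1-α)⁻¹`. Because `eᵀv = 1`,
the entries of `Φ(y)` sum to `(1 + α S)^{-(k-2)/(k-1)} (1 + α S) = (1 + α S)^{1/(k-1)}`,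
which is therefore at most `(1-α)^{-1/(k-1)}`.
-/

section contr

variable {n m : ℕ} {P : Fin n → (Fin m → Fin n) → ℝ} {y : Fin n → ℝ}

theorem contr_nonneg (hP : ∀ i j, 0 ≤ P i j) (hy : ∀ i, 0 ≤ y i) (i : Fin n) :
    0 ≤ contr P y i :=
  sum_nonneg fun j _ => mul_nonneg (hP i j) (prod_nonneg fun s _ => hy (j s))

theorem sum_contr_le_pow_sum (hPs : ∀ j, ∑ i, P i j ≤ 1) (hy : ∀ i, 0 ≤ y i) :
    ∑ i, contr P y i ≤ (∑ i, y i) ^ m := by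
  unfold contr
  rw [Fintype.sum_pow, sum_comm]
  refine sum_le_sum fun j _ => ?_
  rw [← sum_mul]
  exact mul_le_of_le_one_left (prod_nonneg fun s _ => hy (j s)) (hPs j)

end contr

theorem pow_le_inv_of_le_rpow_neg_inv {t a : ℝ} {m : ℕ} (ht : 0 ≤ t) (ha : 0 < a) (hm : m ≠ 0)
    (hta : t ≤ a ^ (-1 / (m : ℝ))) : t ^ m ≤ a⁻¹ :=
  calc t ^ m ≤ (a ^ (-1 / (m : ℝ))) ^ m := pow_le_pow_left₀ ht hta m
    _ = a⁻¹ := by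
      rw [← rpow_natCast, ← rpow_mul ha.le, div_mul_cancel₀ _ (Nat.cast_ne_zero.mpr hm),
        rpow_neg_one]

theorem one_add_mul_le_inv_one_sub {α S : ℝ} (hα0 : 0 ≤ α) (hα1 : α < 1) (hS : S ≤ (1 - α)⁻¹) :
    1 + α * S ≤ (1 - α)⁻¹ :=
  calc 1 + α * S ≤ 1 + α * (1 - α)⁻¹ := by gcongr
    _ = (1 - α)⁻¹ := by field_simp [(sub_pos.mpr hα1).ne']; ring

theorem sum_Phi {n k : ℕ} (hk : k ≠ 1) {P : Fin n → (Fin (k-1) → Fin n) → ℝ} {v : Fin n → ℝ}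
    (hv1 : ∑ i, v i = 1) {α : ℝ} {y : Fin n → ℝ} (hpos : 0 < 1 + α * ∑ l, contr P y l) :
    ∑ i, Phi k P v α y i = (1 + α * ∑ l, contr P y l) ^ (1 / ((k : ℝ) - 1)) := by
  have hk' : (k : ℝ) - 1 ≠ 0 := sub_ne_zero.mpr (by exact_mod_cast hk)
  unfold Phi
  rw [← mul_sum, sum_add_distrib, hv1, ← mul_sum]
  nth_rewrite 2 [← rpow_one (1 + α * ∑ l, contr P y l)]
  rw [← rpow_add hpos]
  congr 1
  field_simp
  ring

theorem Phi_maps_Delta_into_itself_general (n k : ℕ) (hk : 2 ≤ k)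
    (P : Fin n → (Fin (k-1) → Fin n) → ℝ)
    (hP0 : ∀ i j, 0 ≤ P i j) (hPs : ∀ j, ∑ i, P i j ≤ 1)
    (v : Fin n → ℝ) (hv0 : ∀ i, 0 ≤ v i) (hv1 : ∑ i, v i = 1)
    (α : ℝ) (hα0 : 0 ≤ α) (hα1 : α < 1)
    (y : Fin n → ℝ) (hy : ∀ i, 0 ≤ y i)
    (hyΔ : ∑ i, y i ≤ (1 - α) ^ (-(1:ℝ)/((k:ℝ)-1))) :
    (∀ i, 0 ≤ Phi k P v α y i) ∧ ∑ i, Phi k P v α y i ≤ (1 - α) ^ (-(1:ℝ)/((k:ℝ)-1)) := by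
  have hα : 0 < 1 - α := sub_pos.mpr hα1
  have hcast : ((k - 1 : ℕ) : ℝ) = (k : ℝ) - 1 := by rw [Nat.cast_sub (by omega), Nat.cast_one]
  set S := ∑ l, contr P y l
  have hS0 : 0 ≤ S := sum_nonneg fun l _ => contr_nonneg hP0 hy l
  have hpos : 0 < 1 + α * S := by positivity
  have hS : S ≤ (1 - α)⁻¹ := (sum_contr_le_pow_sum hPs hy).trans <|
    pow_le_inv_of_le_rpow_neg_inv (sum_nonneg fun i _ => hy i) hα (by omega) (hcast ▸ hyΔ)
  refine ⟨fun i => ?_, ?_⟩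
  · exact mul_nonneg (rpow_nonneg hpos.le _)
      (add_nonneg (hv0 i) (mul_nonneg hα0 (contr_nonneg hP0 hy i)))
  · rw [sum_Phi (by omega) hv1 hpos, neg_div, rpow_neg hα.le, ← inv_rpow hα.le]
    exact rpow_le_rpow hpos.le (one_add_mul_le_inv_one_sub hα0 hα1 hS)
      (one_div_nonneg.mpr (hcast ▸ Nat.cast_nonneg _))

theorem Phi_maps_Delta_into_itself (n k : ℕ) (hn : 0 < n) (hk : 2 ≤ k)
    (P : Fin n → (Fin (k-1) → Fin n) → ℝ)
    (hP0 : ∀ i j, 0 ≤ P i j) (hPs : ∀ j, ∑ i, P i j ≤ 1)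
    (v : Fin n → ℝ) (hv0 : ∀ i, 0 ≤ v i) (hv1 : ∑ i, v i = 1)
    (α : ℝ) (hα0 : 0 ≤ α) (hα1 : α < 1)
    (y : Fin n → ℝ) (hy : ∀ i, 0 ≤ y i)
    (hyΔ : ∑ i, y i ≤ (1 - α) ^ (-(1:ℝ)/((k:ℝ)-1))) :
    (∀ i, 0 ≤ Phi k P v α y i) ∧ ∑ i, Phi k P v α y i ≤ (1 - α) ^ (-(1:ℝ)/((k:ℝ)-1)) :=
  Phi_maps_Delta_into_itself_general n k hk P hP0 hPs v hv0 hv1 α hα0 hα1 y hy hyΔ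
end

section
/- Suppose the dangling correction P = P̄ + v ∘ (e^{∘(k−1)} − P̄ ×̄₁ e) holds. If y ∈ ℝ^n_+ solves the MLPPR system (e^T y)^{k-2} y − α P̄ y^{k-1} = v, then y solves the homogeneous MPR equation z (e^T z)^{k-2} = α P z^{k-1} + (1−α) v (e^T z)^{k-1}; in particular x = y/(e^T y) is a stochastic solution of x = α P x^{k-1} + (1−α) v. -/
open Finset Real

/-!
Write `S = ∑ l, y l`. Summing the MLPPR equation over `i` gives the mass identity
`α ∑ (P̄ y^{k-1}) = S ^ (k-1) - 1`. The dangling correction adds to `P̄ y^{k-1}` the vector `v`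
times the missing mass `S ^ (k-1) - ∑ (P̄ y^{k-1})`, and by the mass identity `α` times the
missing mass is `1 - (1 - α) S ^ (k-1)`; substituting this into the MLPPR equation gives the
homogeneous MPR equation. As `y ↦ P y^{k-1}` is homogeneous of degree `k - 1`, dividing by
`S ^ (k-1)` yields the stochastic fixed point `y / S`; here `S > 0` because `y = 0` would force
`v = 0`.
-/

section Contraction

variable {n m : ℕ}

theorem sum_contr (P : Fin n → (Fin m → Fin n) → ℝ) (y : Fin n → ℝ) :
    ∑ i, contr P y i = ∑ j : Fin m → Fin n, (∑ i, P i j) * ∏ s, y (j s) := by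
  simp only [contr, Finset.sum_comm (γ := Fin n), Finset.sum_mul]

theorem contr_const_mul (P : Fin n → (Fin m → Fin n) → ℝ) (y : Fin n → ℝ) (c : ℝ) (i : Fin n) :
    contr P (fun l => c * y l) i = c ^ m * contr P y i := by
  simp only [contr, Finset.mul_sum, Finset.prod_mul_distrib, Finset.prod_const, Finset.card_univ,
    Fintype.card_fin]
  exact Finset.sum_congr rfl fun j _ => by ring

theorem contr_zero (hm : 0 < m) (P : Fin n → (Fin m → Fin n) → ℝ) (i : Fin n) :
    contr P 0 i = 0 :=
  Finset.sum_eq_zero fun j _ => by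
    rw [Finset.prod_eq_zero (Finset.mem_univ ⟨0, hm⟩) rfl, mul_zero]

theorem contr_eq_add_of_dangling_correction {Pb P : Fin n → (Fin m → Fin n) → ℝ} {v : Fin n → ℝ}
    (hP : ∀ i j, P i j = Pb i j + v i * (1 - ∑ l, Pb l j)) (y : Fin n → ℝ) (i : Fin n) :
    contr P y i = contr Pb y i + v i * ((∑ l, y l) ^ m - ∑ l, contr Pb y l) := by
  rw [sum_contr, Fintype.sum_pow, ← Finset.sum_sub_distrib, Finset.mul_sum, contr, contr,
    ← Finset.sum_add_distrib]
  exact Finset.sum_congr rfl fun j _ => by rw [hP]; ring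

end Contraction

section MLPPR

variable {n k : ℕ} {Pb : Fin n → (Fin (k-1) → Fin n) → ℝ} {v y : Fin n → ℝ} {α : ℝ}

theorem pow_sub_two_mul_self (hk : 2 ≤ k) (S : ℝ) : S ^ (k-2) * S = S ^ (k-1) := by
  rw [← pow_succ]; congr 1; omega

theorem mlppr_mass (hk : 2 ≤ k) (hv1 : ∑ i, v i = 1)
    (heq : ∀ i, (∑ l, y l) ^ (k-2) * y i - α * contr Pb y i = v i) :
    (∑ l, y l) ^ (k-1) - α * ∑ l, contr Pb y l = 1 := by
  have hsum := Finset.sum_congr rfl fun i (_ : i ∈ Finset.univ) => heq i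
  rwa [Finset.sum_sub_distrib, ← Finset.mul_sum, ← Finset.mul_sum, hv1,
    pow_sub_two_mul_self hk] at hsum

theorem mlppr_sum_pos (hk : 2 ≤ k) (hv1 : ∑ i, v i = 1) (hy0 : ∀ i, 0 ≤ y i)
    (heq : ∀ i, (∑ l, y l) ^ (k-2) * y i - α * contr Pb y i = v i) :
    0 < ∑ l, y l := by
  refine (Finset.sum_nonneg fun i _ => hy0 i).lt_of_ne fun hS => ?_
  have hy : y = 0 := funext fun i =>
    (Finset.sum_eq_zero_iff_of_nonneg fun i _ => hy0 i).mp hS.symm i (Finset.mem_univ i)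
  have hv : ∀ i, v i = 0 := fun i => by
    rw [← heq i, hy, contr_zero (by omega)]; simp
  simp [hv] at hv1

theorem mlppr_homogeneous (hk : 2 ≤ k) {P : Fin n → (Fin (k-1) → Fin n) → ℝ}
    (hv1 : ∑ i, v i = 1) (hP : ∀ i j, P i j = Pb i j + v i * (1 - ∑ l, Pb l j))
    (heq : ∀ i, (∑ l, y l) ^ (k-2) * y i - α * contr Pb y i = v i) (i : Fin n) :
    y i * (∑ l, y l) ^ (k-2) = α * contr P y i + (1-α) * v i * (∑ l, y l) ^ (k-1) := by
  rw [contr_eq_add_of_dangling_correction hP]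
  linear_combination heq i - v i * mlppr_mass hk hv1 heq

end MLPPR

theorem normalized_of_homogeneous {n k : ℕ} (hk : 2 ≤ k) {P : Fin n → (Fin (k-1) → Fin n) → ℝ}
    {v y : Fin n → ℝ} {α : ℝ} {i : Fin n} (hS : 0 < ∑ l, y l)
    (hhom : y i * (∑ l, y l) ^ (k-2) = α * contr P y i + (1-α) * v i * (∑ l, y l) ^ (k-1)) :
    y i / (∑ l, y l) = α * contr P (fun j => y j / ∑ l, y l) i + (1-α) * v i := by
  set S := ∑ l, y l
  have hpow := pow_sub_two_mul_self hk S
  simp only [div_eq_mul_inv, mul_comm _ S⁻¹, contr_const_mul, inv_pow]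
  field_simp
  linear_combination S * hhom - y i * hpow

theorem mlppr_solution_to_homogeneous_mpr_general (n k : ℕ) (hk : 2 ≤ k)
    (Pb P : Fin n → (Fin (k-1) → Fin n) → ℝ)
    (v : Fin n → ℝ) (hv1 : ∑ i, v i = 1)
    (hP : ∀ i j, P i j = Pb i j + v i * (1 - ∑ l, Pb l j))
    (α : ℝ)
    (y : Fin n → ℝ) (hy0 : ∀ i, 0 ≤ y i)
    (heq : ∀ i, (∑ l, y l) ^ (k-2) * y i - α * contr Pb y i = v i) :
    (∀ i, y i * (∑ l, y l) ^ (k-2) =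
        α * contr P y i + (1-α) * v i * (∑ l, y l) ^ (k-1)) ∧
    ((∀ i, 0 ≤ y i / ∑ l, y l) ∧ (∑ i, y i / ∑ l, y l) = 1 ∧
      ∀ i, y i / (∑ l, y l) =
        α * contr P (fun j => y j / ∑ l, y l) i + (1-α) * v i) := by
  have hhom := mlppr_homogeneous hk hv1 hP heq
  have hS := mlppr_sum_pos hk hv1 hy0 heq
  refine ⟨hhom, fun i => div_nonneg (hy0 i) hS.le, ?_, fun i => normalized_of_homogeneous hk hS (hhom i)⟩
  rw [← Finset.sum_div, div_self hS.ne']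

theorem mlppr_solution_to_homogeneous_mpr (n k : ℕ) (hn : 0 < n) (hk : 2 ≤ k)
    (Pb P : Fin n → (Fin (k-1) → Fin n) → ℝ)
    (hPb0 : ∀ i j, 0 ≤ Pb i j) (hPbs : ∀ j, ∑ i, Pb i j ≤ 1)
    (v : Fin n → ℝ) (hv0 : ∀ i, 0 ≤ v i) (hv1 : ∑ i, v i = 1)
    (hP : ∀ i j, P i j = Pb i j + v i * (1 - ∑ l, Pb l j))
    (α : ℝ) (hα0 : 0 ≤ α) (hα1 : α < 1)
    (y : Fin n → ℝ) (hy0 : ∀ i, 0 ≤ y i)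
    (heq : ∀ i, (∑ l, y l) ^ (k-2) * y i - α * contr Pb y i = v i) :
    (∀ i, y i * (∑ l, y l) ^ (k-2) =
        α * contr P y i + (1-α) * v i * (∑ l, y l) ^ (k-1)) ∧
    ((∀ i, 0 ≤ y i / ∑ l, y l) ∧ (∑ i, y i / ∑ l, y l) = 1 ∧
      ∀ i, y i / (∑ l, y l) =
        α * contr P (fun j => y j / ∑ l, y l) i + (1-α) * v i) :=
  mlppr_solution_to_homogeneous_mpr_general n k hk Pb P v hv1 hP α y hy0 heq
end
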